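/- arXiv:2603.29284 — 3 statements merged into one kernel-verified Lean document; each statement's English description precedes it below -/
import Mathlib

section
/- Let q be a complex number with |q| < 1. Then ∏_{n=1}^∞ (1 − √2 qⁿ + q^{2n}) · ∏_{n=1}^∞ (1 + q^{2n}) · ∏_{n=1}^∞ (1 + √2 qⁿ + q^{2n}) = (q⁸;q⁸)_∞ / (q²;q²)_∞. -/
/-! Over `c² = 2` one has `(1 - c x + x²)(1 + c x + x²) = 1 + x⁴`, so multiplying the left side by
`∏ (1 - x²)` telescopes factor by factor: `(1 + x⁴)(1 + x²)(1 - x²) = 1 - x⁸`, with `x = qⁿ`.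
All products involved are absolutely convergent, which justifies multiplying them termwise. -/

section

variable {ι : Type*} {x : ι → ℂ}

lemma summable_norm_mul_add_mul_sq (hx : Summable (‖x ·‖)) (a b : ℂ) :
    Summable fun i => ‖a * x i + b * x i ^ 2‖ := by
  refine Summable.of_norm_bounded_eventually (hx.mul_left (‖a‖ + ‖b‖)) ?_
  filter_upwards [hx.tendsto_cofinite_zero.eventually (gt_mem_nhds zero_lt_one)] with i hi
  have hxi : ‖x i‖ ^ 2 ≤ ‖x i‖ := by nlinarith [norm_nonneg (x i)]
  calc ‖‖a * x i + b * x i ^ 2‖‖ ≤ ‖a‖ * ‖x i‖ + ‖b‖ * ‖x i‖ ^ 2 := by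
        rw [norm_norm, ← norm_mul, ← norm_pow, ← norm_mul]; exact norm_add_le _ _
    _ ≤ (‖a‖ + ‖b‖) * ‖x i‖ := by nlinarith [norm_nonneg a, norm_nonneg b]

lemma multipliable_one_add_mul_add_mul_sq (hx : Summable (‖x ·‖)) (a b : ℂ) :
    Multipliable fun i => 1 + a * x i + b * x i ^ 2 := by
  simpa only [add_assoc] using
    multipliable_one_add_of_summable (summable_norm_mul_add_mul_sq hx a b)

theorem tprod_quadratic_factors_eq_tprod_one_sub_pow_eight_div (hx : Summable (‖x ·‖))
    (hx1 : ∀ i, x i ^ 2 ≠ 1) {c : ℂ} (hc : c ^ 2 = 2) :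
    (∏' i, (1 - c * x i + x i ^ 2)) * (∏' i, (1 + x i ^ 2)) * (∏' i, (1 + c * x i + x i ^ 2)) =
      (∏' i, (1 - x i ^ 8)) / ∏' i, (1 - x i ^ 2) := by
  have hminus : Multipliable fun i => 1 - c * x i + x i ^ 2 := by
    simpa [sub_eq_add_neg] using multipliable_one_add_mul_add_mul_sq hx (-c) 1
  have hsq : Multipliable fun i => 1 + x i ^ 2 := by
    simpa using multipliable_one_add_mul_add_mul_sq hx 0 1
  have hplus : Multipliable fun i => 1 + c * x i + x i ^ 2 := by
    simpa using multipliable_one_add_mul_add_mul_sq hx c 1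
  have hden : Multipliable fun i => 1 - x i ^ 2 := by
    simpa [sub_eq_add_neg] using multipliable_one_add_mul_add_mul_sq hx 0 (-1)
  have hden_ne : ∏' i, (1 - x i ^ 2) ≠ 0 := by
    simpa [sub_eq_add_neg] using tprod_one_add_ne_zero_of_summable
      (f := fun i => -x i ^ 2) (fun i => by rw [← sub_eq_add_neg, sub_ne_zero]; exact (hx1 i).symm)
      (by simpa using summable_norm_mul_add_mul_sq hx 0 1)
  rw [eq_div_iff hden_ne, ← hminus.tprod_mul hsq, ← (hminus.mul hsq).tprod_mul hplus,
    ← ((hminus.mul hsq).mul hplus).tprod_mul hden]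
  exact tprod_congr fun i => by linear_combination (-(x i ^ 2) * (1 - x i ^ 4)) * hc

end

theorem stmt_6 (q : ℂ) (hq : ‖q‖ < 1) :
    (∏' n : ℕ, (1 - (Real.sqrt 2 : ℂ) * q ^ (n + 1) + q ^ (2 * (n + 1)))) *
      (∏' n : ℕ, (1 + q ^ (2 * (n + 1)))) *
      (∏' n : ℕ, (1 + (Real.sqrt 2 : ℂ) * q ^ (n + 1) + q ^ (2 * (n + 1)))) =
    (∏' n : ℕ, (1 - q ^ (8 * (n + 1)))) / (∏' n : ℕ, (1 - q ^ (2 * (n + 1)))) := by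
  have hsum : Summable fun n : ℕ => ‖q ^ (n + 1)‖ := by
    simpa [norm_pow, summable_nat_add_iff] using summable_geometric_of_lt_one (norm_nonneg q) hq
  have hsq_ne : ∀ n : ℕ, (q ^ (n + 1)) ^ 2 ≠ 1 := fun n h => by
    have := congrArg norm h
    rw [norm_pow, norm_pow, norm_one, ← pow_mul] at this
    exact (pow_lt_one₀ (norm_nonneg q) hq (by positivity)).ne this
  have hc : (Real.sqrt 2 : ℂ) ^ 2 = 2 := by
    rw [← Complex.ofReal_pow, Real.sq_sqrt zero_le_two, Complex.ofReal_ofNat]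
  simp only [pow_mul']
  exact tprod_quadratic_factors_eq_tprod_one_sub_pow_eight_div hsum hsq_ne hc
end

section
/- Let q be a complex number with |q| < 1. Then (1 + √2) ∏_{n=1}^∞ (1 + √2 qⁿ + q^{2n}) − (1 − √2) ∏_{n=1}^∞ (1 − √2 qⁿ + q^{2n}) = 2√2 · ( ∑_{j=-∞}^∞ (−1)^j q^{8j²−2j} ) / (q;q)_∞. -/
/-!
With `z = e^{iπ/4}` one has `z + z⁻¹ = √2`, so `1 ± √2 x + x² = (1 ± z x)(1 ± z⁻¹ x)` and both
products are instances of the Jacobi triple product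
`(q;q)_∞ ∏ (1 + z q^{n+1})(1 + z⁻¹ q^n) = θ(z) := ∑_j z^j q^{j(j+1)/2}`.
As `√2 (1 ± √2) = ±(1 ± z)(1 ± z⁻¹)`, the left side times `√2 (q;q)_∞` is
`(1 + z) θ(z) + (1 - z) θ(-z)`. Pairing the terms `j = 2k` and `j = -2k-1`, which carry the same
power of `q`, turns this into `∑_k 2 (i^k + i^{-k}) q^{2k²+k}`; pairing once more kills odd `k`
and leaves `4 ∑_l (-1)^l q^{8l²+2l}`.

The triple product comes from its finite form
`∏_{n<N} (1 + z q^{n+1})(1 + z⁻¹ q^n) = ∑_j [2N, N+j]_q q^{j(j+1)/2} z^j`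
(induction on `N` with the Pascal rules) by dominated convergence as `N → ∞`:
`[2N, N+j]_q → 1/(q;q)_∞`, and `‖[m, k]_q‖ ≤ [m, k]_{‖q‖} ≤ 1/(‖q‖;‖q‖)_∞`.
-/

open Filter Finset Topology

lemma Summable.tsum_int_eq_tsum_even_add_neg_odd {E : Type*} [NormedAddCommGroup E]
    [CompleteSpace E] {f : ℤ → E} (hf : Summable f) :
    ∑' j, f j = ∑' k, (f (2 * k) + f (-(2 * k + 1))) := by
  have hinj₁ : Function.Injective fun k : ℤ ↦ 2 * k := fun a b h ↦ by simp at h; omega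
  have hinj₂ : Function.Injective fun k : ℤ ↦ -(2 * k + 1) := fun a b h ↦ by simp at h; omega
  have hcompl : IsCompl (Set.range fun k : ℤ ↦ 2 * k) (Set.range fun k : ℤ ↦ -(2 * k + 1)) := by
    have heven : (Set.range fun k : ℤ ↦ 2 * k) = {n | Even n} := Set.ext fun n ↦
      ⟨by rintro ⟨k, rfl⟩; exact ⟨k, two_mul k⟩, by rintro ⟨k, rfl⟩; exact ⟨k, two_mul k⟩⟩
    have hodd : (Set.range fun k : ℤ ↦ -(2 * k + 1)) = {n | Odd n} := Set.ext fun n ↦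
      ⟨by rintro ⟨k, rfl⟩; exact ⟨-k - 1, by ring⟩, by rintro ⟨k, rfl⟩; exact ⟨-k - 1, by ring⟩⟩
    rw [heven, hodd]
    exact Int.isCompl_even_odd
  have he := (hf.comp_injective hinj₁).hasSum
  have ho := (hf.comp_injective hinj₂).hasSum
  exact ((hinj₁.hasSum_range_iff.2 he).add_isCompl hcompl
    (hinj₂.hasSum_range_iff.2 ho)).tsum_eq.trans (he.add ho).tsum_eq.symm

namespace JacobiTripleProduct

def triangle (j : ℤ) : ℤ := j * (j + 1) / 2

lemma two_mul_triangle (j : ℤ) : 2 * triangle j = j * (j + 1) :=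
  Int.mul_ediv_cancel' (Int.even_mul_succ_self j).two_dvd

lemma triangle_eq_iff {j t : ℤ} : triangle j = t ↔ j * (j + 1) = 2 * t := by
  rw [← two_mul_triangle]; omega

lemma triangle_zero : triangle 0 = 0 := triangle_eq_iff.2 (by ring)

lemma triangle_add_one (j : ℤ) : triangle (j + 1) = triangle j + (j + 1) :=
  triangle_eq_iff.2 (by linear_combination -two_mul_triangle j)

lemma triangle_sub_one (j : ℤ) : triangle (j - 1) = triangle j - j :=
  triangle_eq_iff.2 (by linear_combination -two_mul_triangle j)

lemma triangle_two_mul (k : ℤ) : triangle (2 * k) = 2 * k ^ 2 + k := triangle_eq_iff.2 (by ring)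

lemma triangle_neg_two_mul_sub_one (k : ℤ) : triangle (-(2 * k + 1)) = 2 * k ^ 2 + k :=
  triangle_eq_iff.2 (by ring)

lemma abs_sub_one_le_triangle (j : ℤ) : |j| - 1 ≤ triangle j := by
  have h := two_mul_triangle j
  rcases le_or_gt 0 j with hj | hj
  · rw [abs_of_nonneg hj]; nlinarith [sq_nonneg (j - 1)]
  · rw [abs_of_neg hj]
    rcases (show j = -1 ∨ j ≤ -2 by omega) with rfl | hj
    · omega
    · nlinarith

section GaussianBinomial

variable {K : Type*} [Field K]

/-- The Gaussian binomial coefficient `[m, k]_q`, extended by zero to all `k : ℤ`. -/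
def gaussBinom (q : K) : ℕ → ℤ → K
  | 0, k => if k = 0 then 1 else 0
  | m + 1, k => q ^ k * gaussBinom q m k + gaussBinom q m (k - 1)

lemma gaussBinom_succ (q : K) (m : ℕ) (k : ℤ) :
    gaussBinom q (m + 1) k = q ^ k * gaussBinom q m k + gaussBinom q m (k - 1) := rfl

lemma gaussBinom_of_neg (q : K) (m : ℕ) {k : ℤ} (hk : k < 0) : gaussBinom q m k = 0 := by
  induction m generalizing k with
  | zero => simp [gaussBinom, hk.ne]
  | succ m ih => rw [gaussBinom_succ, ih hk, ih (by omega), mul_zero, add_zero]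

lemma gaussBinom_of_lt (q : K) (m : ℕ) {k : ℤ} (hk : m < k) : gaussBinom q m k = 0 := by
  induction m generalizing k with
  | zero => simp [gaussBinom]; omega
  | succ m ih => rw [gaussBinom_succ, ih (by omega), ih (by omega), mul_zero, add_zero]

lemma gaussBinom_zero_right (q : K) (m : ℕ) : gaussBinom q m 0 = 1 := by
  induction m with
  | zero => simp [gaussBinom]
  | succ m ih => rw [gaussBinom_succ, ih, gaussBinom_of_neg q m (by omega)]; simp

lemma gaussBinom_self (q : K) (m : ℕ) : gaussBinom q m m = 1 := by
  induction m with
  | zero => simp [gaussBinom]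
  | succ m ih =>
    rw [gaussBinom_succ, gaussBinom_of_lt q m (by omega), Nat.cast_succ, add_sub_cancel_right, ih]
    simp

lemma gaussBinom_succ' {q : K} (hq : q ≠ 0) (m : ℕ) (k : ℤ) :
    gaussBinom q (m + 1) k = gaussBinom q m k + q ^ ((m : ℤ) + 1 - k) * gaussBinom q m (k - 1) := by
  induction m generalizing k with
  | zero =>
    rcases eq_or_ne k 0 with rfl | h0
    · simp [gaussBinom]
    rcases eq_or_ne k 1 with rfl | h1
    · simp [gaussBinom]
    · simp [gaussBinom, h0, sub_eq_zero, h1]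
  | succ m ih =>
    have h := gaussBinom_succ q (m + 1) k
    rw [ih k, ih (k - 1)] at h
    rw [h, gaussBinom_succ q m k, gaussBinom_succ q m (k - 1)]
    push_cast
    simp only [zpow_sub₀ hq, zpow_add₀ hq, zpow_one, zpow_natCast]
    field_simp
    ring

/-- The two Pascal rules applied one after the other. -/
lemma gaussBinom_add_two {q : K} (hq : q ≠ 0) (m : ℕ) (k : ℤ) :
    gaussBinom q (m + 2) k = q ^ k * gaussBinom q m k + (1 + q ^ ((m : ℤ) + 1)) *
      gaussBinom q m (k - 1) + q ^ ((m : ℤ) + 2 - k) * gaussBinom q m (k - 2) := by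
  have hpow : q ^ ((m : ℤ) + 2 - k) * q ^ (k - 1) = q ^ ((m : ℤ) + 1) := by
    rw [← zpow_add₀ hq]; ring_nf
  rw [gaussBinom_succ' hq, gaussBinom_succ, gaussBinom_succ q m (k - 1), sub_sub,
    one_add_one_eq_two]
  push_cast
  rw [show (m : ℤ) + 1 + 1 - k = m + 2 - k by ring]
  linear_combination gaussBinom q m (k - 1) * hpow

end GaussianBinomial

section QPochhammer

variable {R : Type*} [CommRing R]

def qPoch (q : R) (n : ℕ) : R := ∏ i ∈ range n, (1 - q ^ (i + 1))

lemma qPoch_zero (q : R) : qPoch q 0 = 1 := prod_range_zero _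

lemma qPoch_succ (q : R) (n : ℕ) : qPoch q (n + 1) = qPoch q n * (1 - q ^ (n + 1)) :=
  prod_range_succ _ _

end QPochhammer

lemma gaussBinom_mul_qPoch_mul_qPoch {K : Type*} [Field K] (q : K) {m k : ℕ} (hk : k ≤ m) :
    gaussBinom q m k * qPoch q k * qPoch q (m - k) = qPoch q m := by
  induction m generalizing k with
  | zero =>
    obtain rfl : k = 0 := by omega
    simp [gaussBinom_zero_right, qPoch_zero]
  | succ m ih =>
    rcases k with _ | k
    · simp [gaussBinom_zero_right, qPoch_zero]
    rcases (Nat.succ_le_succ_iff.1 hk).eq_or_lt with rfl | hk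
    · have h := gaussBinom_self q (k + 1)
      push_cast at h
      simp [h, qPoch_zero]
    obtain ⟨a, rfl⟩ : ∃ a, m = k + 1 + a := ⟨m - (k + 1), by omega⟩
    have ih₁ := ih (k := k + 1) (by omega)
    have ih₂ := ih (k := k) (by omega)
    rw [show k + 1 + a - (k + 1) = a by omega, qPoch_succ] at ih₁
    rw [show k + 1 + a - k = a + 1 by omega, qPoch_succ] at ih₂
    rw [show k + 1 + a + 1 - (k + 1) = a + 1 by omega, gaussBinom_succ, zpow_natCast,
      show ((k + 1 : ℕ) : ℤ) - 1 = k by omega, qPoch_succ, qPoch_succ, qPoch_succ]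
    linear_combination (q ^ (k + 1) * (1 - q ^ (a + 1))) * ih₁ + (1 - q ^ (k + 1)) * ih₂

section Limits

variable {K : Type*} [NormedField K] {q : K}

lemma summable_norm_neg_pow_succ (hq : ‖q‖ < 1) : Summable fun n : ℕ ↦ ‖-q ^ (n + 1)‖ := by
  simpa using (summable_nat_add_iff 1).mpr (summable_geometric_of_lt_one (norm_nonneg _) hq)

lemma multipliable_one_sub_pow_succ [CompleteSpace K] (hq : ‖q‖ < 1) :
    Multipliable fun n : ℕ ↦ 1 - q ^ (n + 1) := by
  simpa only [← sub_eq_add_neg] using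
    multipliable_one_add_of_summable (f := fun n : ℕ ↦ -q ^ (n + 1)) (summable_norm_neg_pow_succ hq)

lemma tendsto_qPoch [CompleteSpace K] (hq : ‖q‖ < 1) :
    Tendsto (qPoch q) atTop (𝓝 (∏' n : ℕ, (1 - q ^ (n + 1)))) :=
  (multipliable_one_sub_pow_succ hq).hasProd.tendsto_prod_nat

lemma one_sub_pow_succ_ne_zero (hq : ‖q‖ < 1) (n : ℕ) : 1 - q ^ (n + 1) ≠ 0 := by
  refine sub_ne_zero.2 fun h ↦ ?_
  have := norm_pow q (n + 1) ▸ pow_lt_one₀ (norm_nonneg q) hq n.succ_ne_zero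
  simp [← h] at this

lemma qPoch_ne_zero (hq : ‖q‖ < 1) (n : ℕ) : qPoch q n ≠ 0 :=
  prod_ne_zero_iff.2 fun i _ ↦ one_sub_pow_succ_ne_zero hq i

lemma tprod_one_sub_pow_succ_ne_zero [CompleteSpace K] (hq : ‖q‖ < 1) :
    ∏' n : ℕ, (1 - q ^ (n + 1)) ≠ 0 := by
  simpa only [← sub_eq_add_neg] using tprod_one_add_ne_zero_of_summable
    (f := fun n : ℕ ↦ -q ^ (n + 1))
    (by simpa only [← sub_eq_add_neg] using one_sub_pow_succ_ne_zero hq)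
    (summable_norm_neg_pow_succ hq)

lemma norm_gaussBinom_le (q : K) (m : ℕ) (k : ℤ) : ‖gaussBinom q m k‖ ≤ gaussBinom ‖q‖ m k := by
  induction m generalizing k with
  | zero => by_cases hk : k = 0 <;> simp [gaussBinom, hk]
  | succ m ih =>
    rw [gaussBinom_succ, gaussBinom_succ]
    refine (norm_add_le _ _).trans (add_le_add ?_ (ih _))
    rw [norm_mul, norm_zpow]
    exact mul_le_mul_of_nonneg_left (ih k) (zpow_nonneg (norm_nonneg q) k)

lemma tendsto_gaussBinom_two_mul [CompleteSpace K] (hq : ‖q‖ < 1) (j : ℤ) :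
    Tendsto (fun N : ℕ ↦ gaussBinom q (2 * N) (N + j)) atTop
      (𝓝 (∏' n : ℕ, (1 - q ^ (n + 1)))⁻¹) := by
  set P := ∏' n : ℕ, (1 - q ^ (n + 1))
  have hP := tprod_one_sub_pow_succ_ne_zero hq
  have hlim {f : ℕ → ℤ} (hf : ∀ N : ℕ, (N : ℤ) - j.natAbs ≤ f N) :
      Tendsto (fun N ↦ qPoch q (f N).toNat) atTop (𝓝 P) :=
    (tendsto_qPoch hq).comp <| tendsto_atTop_atTop.2 fun b ↦
      ⟨b + j.natAbs, fun N hN ↦ by have := hf N; omega⟩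
  have key := ((tendsto_qPoch hq).comp (tendsto_id.const_mul_atTop' two_pos)).mul
    (((hlim (f := fun N ↦ N + j) (fun N ↦ by omega)).inv₀ hP).mul
      ((hlim (f := fun N ↦ N - j) (fun N ↦ by omega)).inv₀ hP))
  rw [show P * (P⁻¹ * P⁻¹) = P⁻¹ by field_simp] at key
  refine key.congr' ((eventually_ge_atTop j.natAbs).mono fun N hN ↦ ?_)
  have h := gaussBinom_mul_qPoch_mul_qPoch q (m := 2 * N) (k := (N + j : ℤ).toNat) (by omega)
  rw [show (((N : ℤ) + j).toNat : ℤ) = N + j by omega,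
    show 2 * N - ((N : ℤ) + j).toNat = ((N : ℤ) - j).toNat by omega] at h
  simp only [Function.comp_apply, id]
  rw [← h]
  field_simp [qPoch_ne_zero hq]

end Limits

section RealBounds

variable {r : ℝ}

lemma gaussBinom_nonneg (hr : 0 ≤ r) (m : ℕ) (k : ℤ) : 0 ≤ gaussBinom r m k := by
  simpa [Real.norm_of_nonneg hr] using (norm_nonneg _).trans (norm_gaussBinom_le r m k)

lemma qPoch_nonneg (h0 : 0 ≤ r) (h1 : r ≤ 1) (n : ℕ) : 0 ≤ qPoch r n :=
  prod_nonneg fun _ _ ↦ sub_nonneg.2 (pow_le_one₀ h0 h1)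

lemma qPoch_antitone (h0 : 0 ≤ r) (h1 : r ≤ 1) : Antitone (qPoch r) :=
  antitone_nat_of_succ_le fun n ↦ by
    rw [qPoch_succ]
    exact mul_le_of_le_one_right (qPoch_nonneg h0 h1 n) (by linarith [pow_nonneg h0 (n + 1)])

lemma tprod_le_qPoch (h0 : 0 ≤ r) (h1 : r < 1) (n : ℕ) :
    ∏' i : ℕ, (1 - r ^ (i + 1)) ≤ qPoch r n :=
  (qPoch_antitone h0 h1.le).le_of_tendsto (tendsto_qPoch (by rwa [Real.norm_of_nonneg h0])) n

lemma tprod_one_sub_pow_succ_pos (h0 : 0 ≤ r) (h1 : r < 1) : 0 < ∏' i : ℕ, (1 - r ^ (i + 1)) := by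
  have h1' : ‖r‖ < 1 := by rwa [Real.norm_of_nonneg h0]
  exact (ge_of_tendsto' (tendsto_qPoch h1') (qPoch_nonneg h0 h1.le)).lt_of_ne
    (tprod_one_sub_pow_succ_ne_zero h1').symm

lemma gaussBinom_le_inv_tprod (h0 : 0 ≤ r) (h1 : r < 1) (m : ℕ) (k : ℤ) :
    gaussBinom r m k ≤ (∏' i : ℕ, (1 - r ^ (i + 1)))⁻¹ := by
  set P := ∏' i : ℕ, (1 - r ^ (i + 1))
  have hP : 0 < P := tprod_one_sub_pow_succ_pos h0 h1
  rcases lt_or_ge k 0 with hk | hk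
  · rw [gaussBinom_of_neg r m hk]; positivity
  rcases lt_or_ge (m : ℤ) k with hkm | hkm
  · rw [gaussBinom_of_lt r m hkm]; positivity
  lift k to ℕ using hk
  have hkm : k ≤ m := by exact_mod_cast hkm
  have hk_pos : 0 < qPoch r k := hP.trans_le (tprod_le_qPoch h0 h1 k)
  rw [inv_eq_one_div, le_div_iff₀ hP]
  refine le_of_mul_le_mul_right ?_ hk_pos
  calc gaussBinom r m k * P * qPoch r k
      ≤ gaussBinom r m k * qPoch r (m - k) * qPoch r k := by
        gcongr
        · exact gaussBinom_nonneg h0 m k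
        · exact tprod_le_qPoch h0 h1 _
    _ = qPoch r m := by rw [← gaussBinom_mul_qPoch_mul_qPoch r hkm]; ring
    _ ≤ 1 * qPoch r k := by rw [one_mul]; exact qPoch_antitone h0 h1.le hkm

end RealBounds

lemma summable_zpow_of_abs_sub_one_le {r : ℝ} (h0 : 0 < r) (h1 : r < 1) {e : ℤ → ℤ}
    (he : ∀ j, |j| - 1 ≤ e j) : Summable fun j ↦ r ^ e j := by
  have hgeom : Summable fun n : ℕ ↦ r ^ n := summable_geometric_of_lt_one h0.le h1
  have habs : Summable fun j : ℤ ↦ r⁻¹ * r ^ |j| :=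
    .mul_left _ <| .of_nat_of_neg (hgeom.congr fun n ↦ by simp)
      (hgeom.congr fun n ↦ by simp)
  refine .of_norm_bounded habs fun j ↦ ?_
  rw [Real.norm_of_nonneg (zpow_nonneg h0.le _), ← zpow_neg_one, ← zpow_add₀ h0.ne',
    neg_add_eq_sub]
  exact zpow_le_zpow_right_of_le_one₀ h0 h1.le (he j)

section FiniteTripleProduct

variable {K : Type*} [NormedField K] {q z : K}

noncomputable def theta (q z : K) : K := ∑' j : ℤ, z ^ j * q ^ triangle j

noncomputable def finiteTheta (q z : K) (N : ℕ) : K :=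
  ∑' j : ℤ, gaussBinom q (2 * N) (N + j) * (z ^ j * q ^ triangle j)

lemma summable_mul_gaussBinom_mul (q : K) (m : ℕ) (c : ℤ) (u v : ℤ → K) :
    Summable fun j : ℤ ↦ u j * gaussBinom q m (c + j) * v j := by
  refine summable_of_ne_finset_zero (s := Icc (-c) (m - c)) fun j hj ↦ ?_
  rw [mem_Icc, not_and_or, not_le, not_le] at hj
  rcases hj with hj | hj
  · rw [gaussBinom_of_neg q m (by omega), mul_zero, zero_mul]
  · rw [gaussBinom_of_lt q m (by omega), mul_zero, zero_mul]

lemma finiteTheta_succ (hq : q ≠ 0) (hz : z ≠ 0) (N : ℕ) :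
    finiteTheta q z (N + 1) =
      finiteTheta q z N * ((1 + z * q ^ (N + 1)) * (1 + z⁻¹ * q ^ N)) := by
  have hsplit (j : ℤ) :
      gaussBinom q (2 * (N + 1)) ((N + 1 : ℕ) + j) * (z ^ j * q ^ triangle j) =
        q ^ ((N : ℤ) + 1 + j) * gaussBinom q (2 * N) ((N + 1) + j) * (z ^ j * q ^ triangle j)
        + (1 + q ^ (2 * (N : ℤ) + 1)) * gaussBinom q (2 * N) (N + j) * (z ^ j * q ^ triangle j)
        + q ^ ((N : ℤ) + 1 - j) * gaussBinom q (2 * N) ((N - 1) + j) *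
          (z ^ j * q ^ triangle j) := by
    have e := gaussBinom_add_two hq (2 * N) (N + 1 + j)
    push_cast at e ⊢
    rw [show (N : ℤ) + 1 + j - 1 = N + j by ring, show (N : ℤ) + 1 + j - 2 = N - 1 + j by ring,
      show 2 * (N : ℤ) + 2 - (N + 1 + j) = N + 1 - j by ring] at e
    rw [show 2 * (N + 1) = 2 * N + 2 by ring, e]
    ring
  -- the outer two sums are `finiteTheta q z N` reindexed by `j ↦ j ∓ 1`
  have hA : ∑' j : ℤ, q ^ ((N : ℤ) + 1 + j) * gaussBinom q (2 * N) ((N + 1) + j) *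
      (z ^ j * q ^ triangle j) = q ^ (N : ℤ) * z⁻¹ * finiteTheta q z N := by
    rw [finiteTheta, ← tsum_mul_left, ← (Equiv.subRight (1 : ℤ)).tsum_eq]
    refine tsum_congr fun j ↦ ?_
    rw [Equiv.subRight_apply, show (N : ℤ) + 1 + (j - 1) = N + j by ring, triangle_sub_one,
      zpow_sub₀ hq, zpow_sub_one₀ hz, zpow_add₀ hq]
    field_simp
  have hC : ∑' j : ℤ, q ^ ((N : ℤ) + 1 - j) * gaussBinom q (2 * N) ((N - 1) + j) *
      (z ^ j * q ^ triangle j) = q ^ ((N : ℤ) + 1) * z * finiteTheta q z N := by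
    rw [finiteTheta, ← tsum_mul_left, ← (Equiv.addRight (1 : ℤ)).tsum_eq]
    refine tsum_congr fun j ↦ ?_
    rw [Equiv.coe_addRight, show (N : ℤ) - 1 + (j + 1) = N + j by ring, triangle_add_one,
      zpow_add₀ hq, zpow_add_one₀ hz, show (N : ℤ) + 1 - (j + 1) = N - j by ring, zpow_sub₀ hq,
      zpow_add₀ hq, zpow_add_one₀ hq]
    field_simp
  have hB : ∑' j : ℤ, (1 + q ^ (2 * (N : ℤ) + 1)) * gaussBinom q (2 * N) (N + j) *
      (z ^ j * q ^ triangle j) = (1 + q ^ (2 * (N : ℤ) + 1)) * finiteTheta q z N := by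
    rw [finiteTheta, ← tsum_mul_left]
    exact tsum_congr fun j ↦ by ring
  rw [finiteTheta, tsum_congr hsplit, Summable.tsum_add (.add (summable_mul_gaussBinom_mul ..)
    (summable_mul_gaussBinom_mul ..)) (summable_mul_gaussBinom_mul ..),
    Summable.tsum_add (summable_mul_gaussBinom_mul ..) (summable_mul_gaussBinom_mul ..), hA, hB, hC]
  simp only [two_mul, zpow_add₀ hq, zpow_one, zpow_natCast, pow_succ]
  field_simp
  ring

lemma prod_range_eq_finiteTheta (hq : q ≠ 0) (hz : z ≠ 0) (N : ℕ) :
    ∏ n ∈ range N, ((1 + z * q ^ (n + 1)) * (1 + z⁻¹ * q ^ n)) = finiteTheta q z N := by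
  induction N with
  | zero =>
    rw [prod_range_zero, finiteTheta, tsum_eq_single 0 fun j hj ↦ by simp [gaussBinom, hj]]
    simp [gaussBinom, triangle_zero]
  | succ N ih => rw [prod_range_succ, ih, finiteTheta_succ hq hz]

end FiniteTripleProduct

section TripleProduct

variable {K : Type*} [NormedField K] [CompleteSpace K] {q z : K}

lemma multipliable_one_add_mul_pow (hq : ‖q‖ < 1) (c : K) (k : ℕ) :
    Multipliable fun n : ℕ ↦ 1 + c * q ^ (n + k) := by
  refine multipliable_one_add_of_summable (f := fun n : ℕ ↦ c * q ^ (n + k)) ?_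
  simpa [pow_add, mul_assoc] using
    ((summable_geometric_of_lt_one (norm_nonneg _) hq).mul_right (‖q‖ ^ k)).mul_left ‖c‖

lemma summable_mul_zpow_of_norm_le (hq0 : q ≠ 0) (hq : ‖q‖ < 1) {c : ℤ → K} {C : ℝ}
    (hc : ∀ j, ‖c j‖ ≤ C) {e : ℤ → ℤ} (he : ∀ j, |j| - 1 ≤ e j) :
    Summable fun j ↦ c j * q ^ e j := by
  refine .of_norm_bounded ((summable_zpow_of_abs_sub_one_le (norm_pos_iff.2 hq0) hq he).mul_left C)
    fun j ↦ ?_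
  rw [norm_mul, norm_zpow]
  exact mul_le_mul_of_nonneg_right (hc j) (zpow_nonneg (norm_nonneg q) _)

lemma tendsto_finiteTheta (hq0 : q ≠ 0) (hq : ‖q‖ < 1) (hz : ‖z‖ = 1) :
    Tendsto (finiteTheta q z) atTop
      (𝓝 ((∏' n : ℕ, (1 - q ^ (n + 1)))⁻¹ * theta q z)) := by
  rw [theta, ← tsum_mul_left]
  refine tendsto_tsum_of_dominated_convergence
    (bound := fun j ↦ (∏' n : ℕ, (1 - ‖q‖ ^ (n + 1)))⁻¹ * ‖q‖ ^ triangle j)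
    ((summable_zpow_of_abs_sub_one_le (norm_pos_iff.2 hq0) hq abs_sub_one_le_triangle).mul_left _)
    (fun j ↦ (tendsto_gaussBinom_two_mul hq j).mul_const _) (.of_forall fun N j ↦ ?_)
  rw [norm_mul, norm_mul, norm_zpow, norm_zpow, hz, one_zpow, one_mul]
  exact mul_le_mul_of_nonneg_right ((norm_gaussBinom_le _ _ _).trans
    (gaussBinom_le_inv_tprod (norm_nonneg q) hq _ _)) (zpow_nonneg (norm_nonneg q) _)

theorem jacobi_triple_product (hq0 : q ≠ 0) (hq : ‖q‖ < 1) (hz : ‖z‖ = 1) :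
    (∏' n : ℕ, (1 - q ^ (n + 1))) * ((∏' n : ℕ, (1 + z * q ^ (n + 1))) *
      ∏' n : ℕ, (1 + z⁻¹ * q ^ n)) = theta q z := by
  have hz0 : z ≠ 0 := norm_ne_zero_iff.1 (hz ▸ one_ne_zero)
  have hprod : Tendsto (fun N ↦ ∏ n ∈ range N, ((1 + z * q ^ (n + 1)) * (1 + z⁻¹ * q ^ n))) atTop
      (𝓝 ((∏' n : ℕ, (1 + z * q ^ (n + 1))) * ∏' n : ℕ, (1 + z⁻¹ * q ^ n))) := by
    simp_rw [prod_mul_distrib]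
    exact (multipliable_one_add_mul_pow hq z 1).hasProd.tendsto_prod_nat.mul
      (multipliable_one_add_mul_pow hq z⁻¹ 0).hasProd.tendsto_prod_nat
  simp_rw [prod_range_eq_finiteTheta hq0 hz0] at hprod
  rw [tendsto_nhds_unique hprod (tendsto_finiteTheta hq0 hq hz), ← mul_assoc,
    mul_inv_cancel₀ (tprod_one_sub_pow_succ_ne_zero hq), one_mul]

end TripleProduct

section Theta

open Complex

lemma I_zpow_neg (n : ℤ) : I ^ (-n) = (-I) ^ n := by rw [← inv_zpow', inv_I]

lemma zpow_two_mul_of_sq_eq {z w : ℂ} (hz : z ^ 2 = w) (k : ℤ) : z ^ (2 * k) = w ^ k := by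
  rw [zpow_mul, zpow_ofNat, hz]

lemma abs_sub_one_le_two_mul_sq_add (k : ℤ) : |k| - 1 ≤ 2 * k ^ 2 + k := by
  have h := abs_sub_one_le_triangle (2 * k)
  rw [triangle_two_mul, abs_mul, abs_two] at h
  linarith [abs_nonneg k]

lemma tsum_I_zpow_add_I_zpow_neg {q : ℂ} (hq0 : q ≠ 0) (hq : ‖q‖ < 1) :
    ∑' k : ℤ, 2 * (I ^ k + I ^ (-k)) * q ^ (2 * k ^ 2 + k) =
      4 * ∑' j : ℤ, (-1) ^ j * q ^ (8 * j ^ 2 - 2 * j) := by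
  have hsum : Summable fun k : ℤ ↦ 2 * (I ^ k + I ^ (-k)) * q ^ (2 * k ^ 2 + k) := by
    refine summable_mul_zpow_of_norm_le hq0 hq (C := 4) (fun k ↦ ?_) abs_sub_one_le_two_mul_sq_add
    have h := norm_add_le (I ^ k) (I ^ (-k))
    rw [norm_zpow, norm_zpow, norm_I, one_zpow, one_zpow] at h
    rw [norm_mul, Complex.norm_two]
    linarith
  have hneg : ∑' j : ℤ, (-1) ^ j * q ^ (8 * j ^ 2 - 2 * j) =
      ∑' l : ℤ, (-1) ^ l * q ^ (8 * l ^ 2 + 2 * l) := by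
    rw [← (Equiv.neg ℤ).tsum_eq]
    refine tsum_congr fun l ↦ ?_
    rw [Equiv.neg_apply, ← inv_zpow', inv_neg_one]
    ring_nf
  -- the odd-indexed terms cancel since `I ^ k + I ^ (-k) = 2 Re (I ^ k)`
  rw [hneg, hsum.tsum_int_eq_tsum_even_add_neg_odd, ← tsum_mul_left]
  refine tsum_congr fun l ↦ ?_
  rw [neg_neg, I_zpow_neg, I_zpow_neg, Even.neg_zpow (even_two_mul l),
    Odd.neg_zpow (odd_two_mul_add_one l), zpow_two_mul_of_sq_eq I_sq]
  ring_nf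

lemma norm_eq_one_of_sq_eq_I {z : ℂ} (hz : z ^ 2 = I) : ‖z‖ = 1 := by
  have h : ‖z‖ ^ 2 = 1 := by rw [← norm_pow, hz, norm_I]
  nlinarith [norm_nonneg z]

lemma theta_combination_of_sq_eq_I {q z : ℂ} (hq0 : q ≠ 0) (hq : ‖q‖ < 1) (hz : z ^ 2 = I) :
    (1 + z) * theta q z + (1 - z) * theta q (-z) =
      4 * ∑' j : ℤ, (-1) ^ j * q ^ (8 * j ^ 2 - 2 * j) := by
  have hz1 := norm_eq_one_of_sq_eq_I hz
  have hz0 : z ≠ 0 := norm_ne_zero_iff.1 (hz1 ▸ one_ne_zero)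
  have hθ {w : ℂ} (hw : ‖w‖ = 1) : Summable fun j : ℤ ↦ w ^ j * q ^ triangle j :=
    summable_mul_zpow_of_norm_le hq0 hq (C := 1) (fun j ↦ by rw [norm_zpow, hw, one_zpow])
      abs_sub_one_le_triangle
  have h₁ := (hθ hz1).mul_left (1 + z)
  have h₂ := (hθ (by rw [norm_neg, hz1])).mul_left (1 - z)
  rw [theta, theta, ← tsum_I_zpow_add_I_zpow_neg hq0 hq, ← tsum_mul_left, ← tsum_mul_left,
    ← h₁.tsum_add h₂, (h₁.add h₂).tsum_int_eq_tsum_even_add_neg_odd]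
  refine tsum_congr fun k ↦ ?_
  -- `(1 + z) z ^ n + (1 - z) (-z) ^ n` is `2 z ^ n` for even `n` and `2 z ^ (n + 1)` for odd `n`
  rw [triangle_two_mul, triangle_neg_two_mul_sub_one, Even.neg_zpow (even_two_mul k),
    Odd.neg_zpow (odd_two_mul_add_one k).neg, show -(2 * k + 1) = 2 * -k - 1 by ring,
    zpow_sub_one₀ hz0, zpow_two_mul_of_sq_eq hz, zpow_two_mul_of_sq_eq hz]
  field_simp
  ring

end Theta

theorem jacobi_triple_product_add_inv {K : Type*} [NormedField K] [CompleteSpace K]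
    {q z : K} (hq0 : q ≠ 0) (hq : ‖q‖ < 1) (hz : ‖z‖ = 1) :
    (1 + z⁻¹) * (∏' n : ℕ, (1 + (z + z⁻¹) * q ^ (n + 1) + q ^ (2 * (n + 1)))) *
      ∏' n : ℕ, (1 - q ^ (n + 1)) = theta q z := by
  have hz0 : z ≠ 0 := norm_ne_zero_iff.1 (hz ▸ one_ne_zero)
  have hfactor (n : ℕ) : 1 + (z + z⁻¹) * q ^ (n + 1) + q ^ (2 * (n + 1)) =
      (1 + z * q ^ (n + 1)) * (1 + z⁻¹ * q ^ (n + 1)) := by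
    rw [pow_mul']
    field_simp
    ring
  have hpeel : ∏' n : ℕ, (1 + z⁻¹ * q ^ n) = (1 + z⁻¹) * ∏' n : ℕ, (1 + z⁻¹ * q ^ (n + 1)) := by
    rw [tprod_eq_zero_mul' (f := fun n ↦ 1 + z⁻¹ * q ^ n) (multipliable_one_add_mul_pow hq z⁻¹ 1),
      pow_zero, mul_one]
  rw [tprod_congr hfactor, (multipliable_one_add_mul_pow hq z 1).tprod_mul
    (multipliable_one_add_mul_pow hq z⁻¹ 1), ← jacobi_triple_product hq0 hq hz, hpeel]
  ring

lemma exists_sq_eq_I_and_add_inv_eq {s : ℂ} (hs : s ^ 2 = 2) :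
    ∃ z : ℂ, z ^ 2 = Complex.I ∧ z + z⁻¹ = s := by
  have hs0 : s ≠ 0 := fun h ↦ by simp [h] at hs
  have hinv : ((1 + Complex.I) / s)⁻¹ = (1 - Complex.I) / s :=
    inv_eq_of_mul_eq_one_right <| by
      field_simp
      linear_combination -Complex.I_sq - hs
  refine ⟨(1 + Complex.I) / s, ?_, ?_⟩
  · field_simp
    linear_combination Complex.I_sq - Complex.I * hs
  · rw [hinv]
    field_simp
    linear_combination -hs

end JacobiTripleProduct

open JacobiTripleProduct in
theorem stmt_8 (q : ℂ) (hq : ‖q‖ < 1) :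
    (1 + (Real.sqrt 2 : ℂ)) *
        (∏' n : ℕ, (1 + (Real.sqrt 2 : ℂ) * q ^ (n + 1) + q ^ (2 * (n + 1)))) -
      (1 - (Real.sqrt 2 : ℂ)) *
        (∏' n : ℕ, (1 - (Real.sqrt 2 : ℂ) * q ^ (n + 1) + q ^ (2 * (n + 1)))) =
    2 * (Real.sqrt 2 : ℂ) * (∑' j : ℤ, (-1) ^ j * q ^ (8 * j ^ 2 - 2 * j)) /
      ∏' n : ℕ, (1 - q ^ (n + 1)) := by
  rcases eq_or_ne q 0 with rfl | hq0
  · have h8 (j : ℤ) (hj : j ≠ 0) : 8 * j ^ 2 - 2 * j ≠ 0 := fun h ↦ hj (by nlinarith)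
    rw [tsum_eq_single 0 fun j hj ↦ by rw [zero_zpow _ (h8 j hj), mul_zero]]
    simp
    ring
  have hs : (Real.sqrt 2 : ℂ) ^ 2 = 2 := by
    rw [← Complex.ofReal_pow, Real.sq_sqrt zero_le_two, Complex.ofReal_ofNat]
  generalize (Real.sqrt 2 : ℂ) = s at hs ⊢
  have hs0 : s ≠ 0 := fun h ↦ by simp [h] at hs
  obtain ⟨z, hz2, hzs⟩ := exists_sq_eq_I_and_add_inv_eq hs
  have hz1 := norm_eq_one_of_sq_eq_I hz2
  have hzz : z * z⁻¹ = 1 := mul_inv_cancel₀ (norm_ne_zero_iff.1 (hz1 ▸ one_ne_zero))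
  have hplus := jacobi_triple_product_add_inv hq0 hq hz1
  have hminus := jacobi_triple_product_add_inv hq0 hq (z := -z) (by rwa [norm_neg])
  rw [hzs] at hplus
  rw [inv_neg, ← neg_add, hzs] at hminus
  simp only [neg_mul, ← sub_eq_add_neg] at hminus
  rw [eq_div_iff (tprod_one_sub_pow_succ_ne_zero hq)]
  refine mul_left_cancel₀ hs0 ?_
  set P := ∏' n : ℕ, (1 + s * q ^ (n + 1) + q ^ (2 * (n + 1)))
  set M := ∏' n : ℕ, (1 - s * q ^ (n + 1) + q ^ (2 * (n + 1)))
  set E := ∏' n : ℕ, (1 - q ^ (n + 1))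
  set Θ := ∑' j : ℤ, (-1) ^ j * q ^ (8 * j ^ 2 - 2 * j)
  -- `s (1 + s) = (1 + z) (1 + z⁻¹)` and `s (1 - s) = -(1 - z) (1 - z⁻¹)`
  linear_combination (1 + z) * hplus + (1 - z) * hminus + theta_combination_of_sq_eq_I hq0 hq hz2
    + (M * E - P * E) * hzs + (P * E + M * E - 2 * Θ) * hs - (P * E + M * E) * hzz
end

section
/- Let q be a complex number with |q| < 1, and for each integer k ≥ 0 set B₂(k) = (1+√2)·sin((2k+1)·3π/8)/sin(3π/8) − (1−√2)·sin((2k+1)π/8)/sin(π/8). Then ∑_{k=0}^∞ (−1)^k B₂(k) q^{k(k+1)/2} = 2√2 · ∑_{j=-∞}^∞ (−1)^j q^{8j²−2j}. -/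
/-!
Both sine arguments of `B₂ (k + 4)` are those of `B₂ k` shifted by an odd multiple of `π`, so
`B₂ (k + 4) = -B₂ k`; together with `B₂ 1 = B₂ 2 = 0` and `B₂ 0 = B₂ 3 = 2√2` (the vanishing comes
from `(1 + √2) sin² (π/8) = (√2 - 1) sin² (3π/8)`) only `k ≡ 0, 3 (mod 4)` contribute. These are the
`k` with `2k + 1 = |8j - 1|` for an integer `j`, and for them `k(k+1)/2 = 8j² - 2j` and
`(-1)^k B₂ k = (-1)^j 2√2`, so the left-hand series is the theta series reindexed.
-/

/-- The coefficient `B₂(k) = (1+√2)·sin((2k+1)·3π/8)/sin(3π/8) - (1-√2)·sin((2k+1)π/8)/sin(π/8)`. -/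
noncomputable def B₂ (k : ℕ) : ℝ :=
  (1 + Real.sqrt 2) * Real.sin ((2 * k + 1) * (3 * Real.pi) / 8) / Real.sin (3 * Real.pi / 8) -
    (1 - Real.sqrt 2) * Real.sin ((2 * k + 1) * Real.pi / 8) / Real.sin (Real.pi / 8)

open Real

lemma sin_pi_div_eight_pos : 0 < sin (π / 8) :=
  sin_pos_of_pos_of_lt_pi (by positivity) (by linarith [pi_pos])

lemma sin_three_pi_div_eight_pos : 0 < sin (3 * π / 8) :=
  sin_pos_of_pos_of_lt_pi (by positivity) (by linarith [pi_pos])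

lemma one_add_sqrt_two_mul_sin_pi_div_eight_sq :
    (1 + √2) * sin (π / 8) ^ 2 = (√2 - 1) * sin (3 * π / 8) ^ 2 := by
  have h2 : √2 ^ 2 = 2 := sq_sqrt zero_le_two
  have h3 : sin (3 * π / 8) = cos (π / 8) := by
    rw [← cos_pi_div_two_sub]; ring_nf
  rw [h3, sin_pi_div_eight, cos_pi_div_eight, div_pow, div_pow,
    sq_sqrt (by nlinarith [sqrt_nonneg 2]), sq_sqrt (by positivity)]
  linear_combination (-1 / 2 : ℝ) * h2

lemma sin_ratio_combination_eq_zero :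
    (1 + √2) * -sin (π / 8) / sin (3 * π / 8) - (1 - √2) * sin (3 * π / 8) / sin (π / 8) = 0 := by
  rw [div_sub_div _ _ sin_three_pi_div_eight_pos.ne' sin_pi_div_eight_pos.ne', div_eq_zero_iff]
  left
  linear_combination -one_add_sqrt_two_mul_sin_pi_div_eight_sq

lemma B₂_zero : B₂ 0 = 2 * √2 := by
  simp only [B₂, CharP.cast_eq_zero, mul_zero, zero_add, one_mul]
  rw [mul_div_assoc, div_self sin_three_pi_div_eight_pos.ne', mul_div_assoc,
    div_self sin_pi_div_eight_pos.ne']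
  ring

lemma B₂_one : B₂ 1 = 0 := by
  rw [B₂, show (2 * ((1 : ℕ) : ℝ) + 1) * (3 * π) / 8 = π / 8 + π by push_cast; ring,
    show (2 * ((1 : ℕ) : ℝ) + 1) * π / 8 = 3 * π / 8 by push_cast; ring, sin_add_pi]
  exact sin_ratio_combination_eq_zero

lemma B₂_two : B₂ 2 = 0 := by
  rw [B₂, show (2 * ((2 : ℕ) : ℝ) + 1) * (3 * π) / 8 = -(π / 8) + 2 * π by push_cast; ring,
    show (2 * ((2 : ℕ) : ℝ) + 1) * π / 8 = π - 3 * π / 8 by push_cast; ring,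
    sin_add_two_pi, sin_neg, sin_pi_sub]
  exact sin_ratio_combination_eq_zero

lemma B₂_three : B₂ 3 = B₂ 0 := by
  rw [B₂, B₂,
    show (2 * ((3 : ℕ) : ℝ) + 1) * (3 * π) / 8 =
        π - (2 * ((0 : ℕ) : ℝ) + 1) * (3 * π) / 8 + 2 * π by push_cast; ring,
    show (2 * ((3 : ℕ) : ℝ) + 1) * π / 8 = π - (2 * ((0 : ℕ) : ℝ) + 1) * π / 8 by push_cast; ring,
    sin_add_two_pi, sin_pi_sub, sin_pi_sub]

lemma B₂_add_four (k : ℕ) : B₂ (k + 4) = -B₂ k := by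
  rw [B₂, B₂,
    show (2 * ((k + 4 : ℕ) : ℝ) + 1) * (3 * π) / 8 = (2 * k + 1) * (3 * π) / 8 + π + 2 * π by
      push_cast; ring,
    show (2 * ((k + 4 : ℕ) : ℝ) + 1) * π / 8 = (2 * k + 1) * π / 8 + π by push_cast; ring,
    sin_add_two_pi, sin_add_pi, sin_add_pi]
  ring

lemma B₂_four_mul_add (n r : ℕ) : B₂ (4 * n + r) = (-1) ^ n * B₂ r := by
  induction n with
  | zero => simp
  | succ n ih => rw [show 4 * (n + 1) + r = 4 * n + r + 4 by ring, B₂_add_four, ih, pow_succ]; ring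

/-- Since `8 * (k * (k + 1) / 2) + 1 = (2 * k + 1) ^ 2` and
`8 * (8 * j ^ 2 - 2 * j) + 1 = (8 * j - 1) ^ 2`, the exponents match exactly when
`2 * k + 1 = |8 * j - 1|`. -/
def thetaIndex (j : ℤ) : ℕ := (8 * j - 1).natAbs / 2

lemma thetaIndex_injective : Function.Injective thetaIndex := by
  intro a b h
  unfold thetaIndex at h
  omega

lemma support_B₂_subset : Function.support B₂ ⊆ Set.range thetaIndex := by
  intro k hk
  have hk4 : k = 4 * (k / 4) + k % 4 := (Nat.div_add_mod k 4).symm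
  have : k % 4 = 0 ∨ k % 4 = 3 := by
    by_contra! h
    obtain h | h : k % 4 = 1 ∨ k % 4 = 2 := by omega
    · exact hk (by rw [hk4, h, B₂_four_mul_add, B₂_one, mul_zero])
    · exact hk (by rw [hk4, h, B₂_four_mul_add, B₂_two, mul_zero])
  rcases this with h | h
  · exact ⟨-(k / 4 : ℕ), by unfold thetaIndex; omega⟩
  · exact ⟨(k / 4 : ℕ) + 1, by unfold thetaIndex; omega⟩

lemma thetaIndex_triangle (j : ℤ) :
    ((thetaIndex j * (thetaIndex j + 1) / 2 : ℕ) : ℤ) = 8 * j ^ 2 - 2 * j := by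
  set k := thetaIndex j with hk
  have hkj : (k : ℤ) = -(4 * j) ∨ (k : ℤ) = 4 * j - 1 := by unfold thetaIndex at hk; omega
  set T := k * (k + 1) / 2
  have htwice : 2 * (T : ℤ) = k * (k + 1) := by
    exact_mod_cast Nat.two_mul_div_two_of_even (Nat.even_mul_succ_self k)
  rcases hkj with h | h <;> rw [h] at htwice <;> linarith

lemma neg_one_pow_thetaIndex_mul_B₂ (j : ℤ) :
    (-1) ^ thetaIndex j * B₂ (thetaIndex j) = (-1) ^ j * (2 * √2) := by
  rcases le_or_gt j 0 with hj | hj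
  · obtain ⟨n, rfl⟩ : ∃ n : ℕ, j = -n := ⟨(-j).toNat, by omega⟩
    rw [show thetaIndex (-n) = 4 * n + 0 by unfold thetaIndex; omega, B₂_four_mul_add, B₂_zero,
      zpow_neg, zpow_natCast, ← inv_pow, inv_neg_one, pow_add, pow_mul]
    norm_num
  · obtain ⟨n, rfl⟩ : ∃ n : ℕ, j = n + 1 := ⟨(j - 1).toNat, by omega⟩
    rw [show thetaIndex (n + 1) = 4 * n + 3 by unfold thetaIndex; omega, B₂_four_mul_add, B₂_three,
      B₂_zero, show (n : ℤ) + 1 = (n + 1 : ℕ) by push_cast; ring, zpow_natCast, pow_add, pow_mul]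
    norm_num [pow_succ]

theorem stmt_11_general (q : ℂ) :
    ∑' k : ℕ, (-1) ^ k * (B₂ k : ℂ) * q ^ (k * (k + 1) / 2) =
      2 * (Real.sqrt 2 : ℂ) * ∑' j : ℤ, (-1) ^ j * q ^ (8 * j ^ 2 - 2 * j) := by
  have hsupp : Function.support (fun k : ℕ => (-1) ^ k * (B₂ k : ℂ) * q ^ (k * (k + 1) / 2)) ⊆
      Set.range thetaIndex :=
    fun k hk => support_B₂_subset fun h => hk (by simp [h])
  rw [← thetaIndex_injective.tsum_eq hsupp, ← tsum_mul_left]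
  refine tsum_congr fun j => ?_
  have hsign := congrArg ((↑) : ℝ → ℂ) (neg_one_pow_thetaIndex_mul_B₂ j)
  push_cast at hsign
  rw [← thetaIndex_triangle j, zpow_natCast]
  linear_combination q ^ (thetaIndex j * (thetaIndex j + 1) / 2) * hsign

theorem stmt_11 (q : ℂ) (hq : ‖q‖ < 1) :
    ∑' k : ℕ, (-1) ^ k * (B₂ k : ℂ) * q ^ (k * (k + 1) / 2) =
      2 * (Real.sqrt 2 : ℂ) * ∑' j : ℤ, (-1) ^ j * q ^ (8 * j ^ 2 - 2 * j) :=
  stmt_11_general q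
end
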